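/- arXiv:1003.1773 — 2 statements merged into one kernel-verified Lean document; each statement's English description precedes it below -/
import Mathlib

section
/- Let V be a finite-dimensional real vector space and let E ⊆ 𝕋_ℂ V be a complex subspace which is isotropic for the ℂ-bilinear extension of the standard pairing, satisfies E ∩ σ(E) = 0, and has dim_ℂ E = dim_ℝ V. Then there exists a unique almost generalized complex structure J on V whose complexification J_ℂ has E as its i-eigenspace, i.e. ker(J_ℂ − i·id) = E. -/
open TensorProduct

noncomputable section

/-- The generalized tangent space `𝕋V = V ⊕ V*`, where `V* = Hom_ℝ(V, ℝ)`. -/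
abbrev GTan (V : Type*) [AddCommGroup V] [Module ℝ V] := V × (V →ₗ[ℝ] ℝ)

/-- The standard pairing `⟨(u,α),(v,β)⟩ = (α(v)+β(u))/2` on `𝕋V`. -/
def stdPairing (V : Type*) [AddCommGroup V] [Module ℝ V] :
    LinearMap.BilinForm ℝ (GTan V) :=
  LinearMap.mk₂ ℝ (fun x y => (x.2 y.1 + y.2 x.1) / 2)
    (fun x x' y => by simp [LinearMap.add_apply]; ring)
    (fun c x y => by simp [LinearMap.smul_apply, smul_eq_mul]; ring)
    (fun x y y' => by simp [map_add]; ring)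
    (fun c x y => by simp [map_smul, smul_eq_mul]; ring)

/-- The ℂ-bilinear extension of the standard pairing to `𝕋_ℂ V = ℂ ⊗_ℝ 𝕋V`. -/
def stdPairingC (V : Type*) [AddCommGroup V] [Module ℝ V] :
    LinearMap.BilinForm ℂ (ℂ ⊗[ℝ] GTan V) :=
  (stdPairing V).baseChange ℂ

/-- The conjugation `σ` on `𝕋_ℂ V`, induced by complex conjugation on `ℂ`
and the identity on `𝕋V`. -/
def conjT (V : Type*) [AddCommGroup V] [Module ℝ V] :
    ℂ ⊗[ℝ] GTan V →ₗ[ℝ] ℂ ⊗[ℝ] GTan V :=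
  TensorProduct.map Complex.conjAe.toLinearMap LinearMap.id

/-- The `i`-eigenspace `ker (J_ℂ - i·id)` of the complexification `J_ℂ` of `J`. -/
def iEigenspace {V : Type*} [AddCommGroup V] [Module ℝ V] (J : GTan V →ₗ[ℝ] GTan V) :
    Submodule ℂ (ℂ ⊗[ℝ] GTan V) :=
  LinearMap.ker (J.baseChange ℂ -
    (Complex.I • LinearMap.id : ℂ ⊗[ℝ] GTan V →ₗ[ℂ] ℂ ⊗[ℝ] GTan V))

/-!
Since `E ∩ σ(E) = 0` and `dim_ℂ E = dim_ℝ V` is half of `dim_ℂ 𝕋_ℂ V`, we have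
`𝕋_ℂ V = E ⊕ σ(E)`. The `ℂ`-linear map acting by `i` on `E` and by `-i` on `σ(E)` commutes
with `σ`, so it is the complexification of a real map `J`. Then `J² = -1` because `i² = (-i)² = -1`,
and `J` is orthogonal because `E` and `σ(E)` are isotropic and `i · (-i) = 1`. Conversely, the
complexification of any `J` with `i`-eigenspace `E` commutes with `σ`, so it acts by `-i` on `σ(E)`;
this pins down `J_ℂ`, hence `J`.
-/

namespace Complexification

variable {M N : Type*} [AddCommGroup M] [Module ℝ M] [AddCommGroup N] [Module ℝ N]

variable (M) in
def conj : ℂ ⊗[ℝ] M →ₛₗ[starRingEnd ℂ] ℂ ⊗[ℝ] M where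
  toFun := TensorProduct.map Complex.conjAe.toLinearMap LinearMap.id
  map_add' := map_add _
  map_smul' c x := by
    induction x using TensorProduct.induction_on with
    | zero => simp
    | tmul d m => simp [smul_tmul']
    | add a b ha hb => simp_all [smul_add]

@[simp]
lemma conj_tmul (c : ℂ) (m : M) : conj M (c ⊗ₜ m) = starRingEnd ℂ c ⊗ₜ m := rfl

@[simp]
lemma conj_conj (x : ℂ ⊗[ℝ] M) : conj M (conj M x) = x := by
  induction x using TensorProduct.induction_on with
  | zero => simp
  | tmul c m => simp
  | add a b ha hb => simp_all

lemma conj_injective : Function.Injective (conj M) :=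
  Function.LeftInverse.injective conj_conj

lemma conj_baseChange (f : M →ₗ[ℝ] N) (x : ℂ ⊗[ℝ] M) :
    conj N (f.baseChange ℂ x) = f.baseChange ℂ (conj M x) := by
  induction x using TensorProduct.induction_on with
  | zero => simp
  | tmul c m => simp
  | add a b ha hb => simp_all

lemma baseChange_conj_conj (B : LinearMap.BilinForm ℝ M) (x y : ℂ ⊗[ℝ] M) :
    B.baseChange ℂ (conj M x) (conj M y) = starRingEnd ℂ (B.baseChange ℂ x y) := by
  induction x using TensorProduct.induction_on with
  | zero => simp
  | tmul c m =>
    induction y using TensorProduct.induction_on with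
    | zero => simp
    | tmul d m' => simp [LinearMap.BilinForm.baseChange_tmul, Complex.conj_ofReal]
    | add a b ha hb => simp_all
  | add a b ha hb => simp_all

variable (M) in
def re : ℂ ⊗[ℝ] M →ₗ[ℝ] M :=
  (TensorProduct.lid ℝ M).toLinearMap ∘ₗ TensorProduct.map Complex.reLm LinearMap.id

@[simp]
lemma re_tmul (c : ℂ) (m : M) : re M (c ⊗ₜ m) = c.re • m := rfl

lemma re_one_tmul (m : M) : re M ((1 : ℂ) ⊗ₜ m) = m := by simp

lemma one_tmul_injective : Function.Injective fun m : M ↦ (1 : ℂ) ⊗ₜ[ℝ] m :=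
  Function.LeftInverse.injective re_one_tmul

lemma add_conj (x : ℂ ⊗[ℝ] M) : x + conj M x = (2 : ℂ) • ((1 : ℂ) ⊗ₜ re M x) := by
  induction x using TensorProduct.induction_on with
  | zero => simp
  | tmul c m =>
    rw [conj_tmul, re_tmul, tmul_smul, smul_tmul', smul_tmul', ← add_tmul]
    congr 1
    apply Complex.ext <;> simp; ring
  | add a b ha hb => rw [map_add, map_add, tmul_add, smul_add, ← ha, ← hb]; abel

lemma one_tmul_re_of_conj_eq {x : ℂ ⊗[ℝ] M} (h : conj M x = x) : (1 : ℂ) ⊗ₜ re M x = x := by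
  have h2 := add_conj x
  rw [h, ← two_smul ℂ x] at h2
  exact (smul_right_injective _ two_ne_zero h2).symm

lemma baseChange_injective :
    Function.Injective fun f : M →ₗ[ℝ] N ↦ f.baseChange ℂ := by
  intro f g h
  ext m
  exact one_tmul_injective (congrArg (fun F : ℂ ⊗[ℝ] M →ₗ[ℂ] ℂ ⊗[ℝ] N ↦ F (1 ⊗ₜ m)) h)

lemma exists_baseChange_eq_of_conj_comm (F : ℂ ⊗[ℝ] M →ₗ[ℂ] ℂ ⊗[ℝ] N)
    (hF : ∀ x, conj N (F x) = F (conj M x)) : ∃ f : M →ₗ[ℝ] N, f.baseChange ℂ = F := by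
  refine ⟨re N ∘ₗ F.restrictScalars ℝ ∘ₗ TensorProduct.mk ℝ ℂ M 1, ?_⟩
  ext m
  simp only [AlgebraTensorModule.curry_apply, curry_apply, LinearMap.coe_restrictScalars,
    LinearMap.baseChange_tmul, LinearMap.coe_comp, Function.comp_apply, mk_apply]
  exact one_tmul_re_of_conj_eq (by rw [hF, conj_tmul, map_one])

lemma isometry_of_baseChange_isometry (B : LinearMap.BilinForm ℝ M) (f : M →ₗ[ℝ] M)
    (h : ∀ x y, B.baseChange ℂ (f.baseChange ℂ x) (f.baseChange ℂ y) = B.baseChange ℂ x y)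
    (x y : M) : B (f x) (f y) = B x y := by
  simpa [LinearMap.BilinForm.baseChange_tmul] using h (1 ⊗ₜ x) (1 ⊗ₜ y)

end Complexification

namespace LinearMap

variable {R W : Type*} [CommRing R] [AddCommGroup W] [Module R W] {p q : Submodule R W}
  (h : IsCompl p q) {c d : R}

lemma ofIsCompl_smul_subtype_add {a b : W} (ha : a ∈ p) (hb : b ∈ q) :
    ofIsCompl h (c • p.subtype) (d • q.subtype) (a + b) = c • a + d • b := by
  rw [map_add, ← Submodule.coe_mk a ha, ← Submodule.coe_mk b hb, ofIsCompl_apply_left,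
    ofIsCompl_apply_right]
  rfl

lemma ker_ofIsCompl_smul_subtype_sub_smul [IsDomain R] [Module.IsTorsionFree R W] (hcd : c ≠ d) :
    ker (ofIsCompl h (c • p.subtype) (d • q.subtype) - c • LinearMap.id) = p := by
  ext x
  obtain ⟨a, b, ha, hb, rfl⟩ := Submodule.codisjoint_iff_exists_add_eq.mp h.codisjoint x
  have hab : c • a + d • b - c • (a + b) = (d - c) • b := by module
  rw [mem_ker, sub_apply, ofIsCompl_smul_subtype_add h ha hb, smul_apply, id_apply, hab,
    smul_eq_zero, sub_eq_zero, or_iff_right (Ne.symm hcd), Submodule.add_mem_iff_right _ ha]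
  exact ⟨fun hb0 ↦ hb0 ▸ p.zero_mem, fun hbp ↦ (Submodule.disjoint_def.mp h.disjoint) b hbp hb⟩

lemma ofIsCompl_smul_subtype_comp_self {e : R} (hc : c * c = e) (hd : d * d = e) :
    ofIsCompl h (c • p.subtype) (d • q.subtype) ∘ₗ ofIsCompl h (c • p.subtype) (d • q.subtype) =
      e • LinearMap.id := by
  ext x
  obtain ⟨a, b, ha, hb, rfl⟩ := Submodule.codisjoint_iff_exists_add_eq.mp h.codisjoint x
  rw [comp_apply, ofIsCompl_smul_subtype_add h ha hb,
    ofIsCompl_smul_subtype_add h (p.smul_mem c ha) (q.smul_mem d hb), smul_apply, id_apply,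
    smul_smul, smul_smul, hc, hd, smul_add]

lemma ofIsCompl_smul_subtype_isometry (B : LinearMap.BilinForm R W)
    (hp : ∀ x ∈ p, ∀ y ∈ p, B x y = 0) (hq : ∀ x ∈ q, ∀ y ∈ q, B x y = 0) (hcd : c * d = 1)
    (x y : W) :
    B (ofIsCompl h (c • p.subtype) (d • q.subtype) x)
      (ofIsCompl h (c • p.subtype) (d • q.subtype) y) = B x y := by
  obtain ⟨a, b, ha, hb, rfl⟩ := Submodule.codisjoint_iff_exists_add_eq.mp h.codisjoint x
  obtain ⟨a', b', ha', hb', rfl⟩ := Submodule.codisjoint_iff_exists_add_eq.mp h.codisjoint y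
  simp only [ofIsCompl_smul_subtype_add h ha hb, ofIsCompl_smul_subtype_add h ha' hb', map_add,
    map_smul, add_apply, smul_apply, smul_eq_mul, hp a ha a' ha', hq b hb b' hb']
  linear_combination (B a b' + B b a') * hcd

end LinearMap

namespace Complexification

open Module

variable {M : Type*} [AddCommGroup M] [Module ℝ M] {E : Submodule ℂ (ℂ ⊗[ℝ] M)}

lemma mem_map_conj {x : ℂ ⊗[ℝ] M} : x ∈ E.map (conj M) ↔ conj M x ∈ E :=
  ⟨by rintro ⟨y, hy, rfl⟩; simpa, fun h ↦ ⟨_, h, conj_conj x⟩⟩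

variable (E) in
lemma finrank_map_conj : finrank ℂ (E.map (conj M)) = finrank ℂ E := by
  let e := Submodule.equivMapOfInjective _ conj_injective E
  have hrank := rank_eq_of_equiv_equiv (starRingEnd ℂ) e.toAddEquiv
    (Function.Involutive.bijective Complex.conj_conj) e.map_smulₛₗ
  exact congrArg Cardinal.toNat hrank.symm

lemma isCompl_map_conj [FiniteDimensional ℝ M] (hE : ∀ x ∈ E, conj M x ∈ E → x = 0)
    (hdim : finrank ℝ M = 2 * finrank ℂ E) : IsCompl E (E.map (conj M)) := by
  refine (Submodule.isCompl_iff_disjoint _ _ ?_).mpr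
    (Submodule.disjoint_def.mpr fun x hx hx' ↦ hE x hx (mem_map_conj.mp hx'))
  rw [finrank_baseChange, finrank_map_conj]
  omega

lemma isotropic_map_conj (B : LinearMap.BilinForm ℝ M)
    (hiso : ∀ x ∈ E, ∀ y ∈ E, B.baseChange ℂ x y = 0) :
    ∀ x ∈ E.map (conj M), ∀ y ∈ E.map (conj M), B.baseChange ℂ x y = 0 := by
  rintro - ⟨x, hx, rfl⟩ - ⟨y, hy, rfl⟩
  rw [baseChange_conj_conj, hiso x hx y hy, map_zero]

variable (hE : IsCompl E (E.map (conj M)))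

def complexStructureOf : ℂ ⊗[ℝ] M →ₗ[ℂ] ℂ ⊗[ℝ] M :=
  LinearMap.ofIsCompl hE (Complex.I • E.subtype) ((-Complex.I) • (E.map (conj M)).subtype)

lemma conj_complexStructureOf (x : ℂ ⊗[ℝ] M) :
    conj M (complexStructureOf hE x) = complexStructureOf hE (conj M x) := by
  obtain ⟨a, b, ha, hb, rfl⟩ := Submodule.codisjoint_iff_exists_add_eq.mp hE.codisjoint x
  have ha' : conj M a ∈ E.map (conj M) := Submodule.mem_map_of_mem ha
  have hb' : conj M b ∈ E := mem_map_conj.mp hb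
  rw [complexStructureOf, LinearMap.ofIsCompl_smul_subtype_add hE ha hb, map_add (conj M) a b,
    add_comm (conj M a), LinearMap.ofIsCompl_smul_subtype_add hE hb' ha', map_add, map_smulₛₗ,
    map_smulₛₗ, map_neg, Complex.conj_I, neg_neg, add_comm]

lemma baseChange_eq_complexStructureOf {f : M →ₗ[ℝ] M}
    (hf : LinearMap.ker (f.baseChange ℂ - Complex.I • LinearMap.id) = E) :
    f.baseChange ℂ = complexStructureOf hE := by
  have hfE : ∀ x ∈ E, f.baseChange ℂ x = Complex.I • x := fun x hx ↦ by
    rw [← hf, LinearMap.mem_ker, LinearMap.sub_apply, sub_eq_zero] at hx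
    exact hx
  refine (LinearMap.ofIsCompl_eq hE (fun u ↦ (hfE u u.2).symm) fun u ↦ ?_).symm
  obtain ⟨y, hy, hyu⟩ := u.2
  rw [LinearMap.smul_apply, Submodule.subtype_apply, ← hyu, ← conj_baseChange, hfE y hy,
    map_smulₛₗ, Complex.conj_I]

lemma complexStructureOf_comp_self :
    complexStructureOf hE ∘ₗ complexStructureOf hE = -LinearMap.id := by
  rw [complexStructureOf, LinearMap.ofIsCompl_smul_subtype_comp_self hE Complex.I_mul_I
    (by rw [neg_mul_neg, Complex.I_mul_I])]
  exact neg_one_smul ℂ (LinearMap.id : ℂ ⊗[ℝ] M →ₗ[ℂ] _)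

lemma ker_complexStructureOf_sub_I_smul :
    LinearMap.ker (complexStructureOf hE - Complex.I • LinearMap.id) = E :=
  LinearMap.ker_ofIsCompl_smul_subtype_sub_smul hE (by norm_num [Complex.ext_iff])

lemma complexStructureOf_isometry (B : LinearMap.BilinForm ℝ M)
    (hiso : ∀ x ∈ E, ∀ y ∈ E, B.baseChange ℂ x y = 0) (x y : ℂ ⊗[ℝ] M) :
    B.baseChange ℂ (complexStructureOf hE x) (complexStructureOf hE y) = B.baseChange ℂ x y :=
  LinearMap.ofIsCompl_smul_subtype_isometry hE _ hiso (isotropic_map_conj B hiso) (by simp) x y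

end Complexification

open Complexification

lemma finrank_gTan (V : Type*) [AddCommGroup V] [Module ℝ V] [FiniteDimensional ℝ V] :
    Module.finrank ℝ (GTan V) = 2 * Module.finrank ℝ V := by
  rw [Module.finrank_prod, Subspace.dual_finrank_eq, two_mul]

/-- If `E ⊆ 𝕋_ℂ V` is an isotropic complex subspace with `E ∩ σ(E) = 0` and
`dim_ℂ E = dim_ℝ V`, then there is a unique almost generalized complex structure `J`
on `V` (i.e. `J² = -id`, `J` orthogonal for the standard pairing) whose
complexification has `E` as its `i`-eigenspace. -/
theorem existsUnique_almost_gc_structure_of_maximal_isotropic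
    (V : Type*) [AddCommGroup V] [Module ℝ V] [FiniteDimensional ℝ V]
    (E : Submodule ℂ (ℂ ⊗[ℝ] GTan V))
    (hiso : ∀ x ∈ E, ∀ y ∈ E, stdPairingC V x y = 0)
    (hconj : ∀ x ∈ E, conjT V x ∈ E → x = 0)
    (hdim : Module.finrank ℂ E = Module.finrank ℝ V) :
    ∃! J : GTan V →ₗ[ℝ] GTan V,
      (J ∘ₗ J = -LinearMap.id ∧
        ∀ x y : GTan V, stdPairing V (J x) (J y) = stdPairing V x y) ∧
      iEigenspace J = E := by
  have hE : IsCompl E (E.map (conj _)) := isCompl_map_conj hconj (by rw [finrank_gTan, hdim])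
  obtain ⟨J, hJ⟩ := exists_baseChange_eq_of_conj_comm _ (conj_complexStructureOf hE)
  refine ⟨J, ⟨⟨baseChange_injective ?_, isometry_of_baseChange_isometry _ J ?_⟩, ?_⟩, ?_⟩
  · dsimp only
    rw [LinearMap.baseChange_comp, LinearMap.baseChange_neg, LinearMap.baseChange_id, hJ]
    exact complexStructureOf_comp_self hE
  · exact hJ ▸ complexStructureOf_isometry hE _ hiso
  · rw [iEigenspace, hJ]
    exact ker_complexStructureOf_sub_I_smul hE
  · rintro J' ⟨-, hJ'⟩
    exact baseChange_injective ((baseChange_eq_complexStructureOf hE hJ').trans hJ.symm)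
end
end

section
/- Let V be a finite-dimensional real vector space, U ⊆ V a linear subspace with inclusion ι : U → V, and E ⊆ 𝕋_ℂ V a maximal isotropic complex subspace. Define E_U := { (X, λ ∘ ι_ℂ) : X ∈ ℂ ⊗_ℝ U, λ ∈ ℂ ⊗_ℝ V*, and (X, λ) ∈ E } ⊆ 𝕋_ℂ U, where ι_ℂ : ℂ ⊗_ℝ U → ℂ ⊗_ℝ V is the complexified inclusion and λ ∘ ι_ℂ is the restriction of λ to ℂ ⊗_ℝ U. Then E_U is a maximal isotropic complex subspace of 𝕋_ℂ U, i.e. it is isotropic for the ℂ-bilinear extension of the standard pairing on 𝕋U and dim_ℂ E_U = dim_ℝ U. -/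
open TensorProduct

noncomputable section

/-- The projection `𝕋_ℂ V → ℂ ⊗ V` onto the first summand. -/
def projTanC (V : Type*) [AddCommGroup V] [Module ℝ V] :
    ℂ ⊗[ℝ] GTan V →ₗ[ℂ] ℂ ⊗[ℝ] V :=
  (LinearMap.fst ℝ V (V →ₗ[ℝ] ℝ)).baseChange ℂ

/-- The projection `𝕋_ℂ V → ℂ ⊗ V*` onto the second summand. -/
def projCotC (V : Type*) [AddCommGroup V] [Module ℝ V] :
    ℂ ⊗[ℝ] GTan V →ₗ[ℂ] ℂ ⊗[ℝ] (V →ₗ[ℝ] ℝ) :=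
  (LinearMap.snd ℝ V (V →ₗ[ℝ] ℝ)).baseChange ℂ

/-!
Let `W ⊆ 𝕋_ℂ V` consist of the elements whose vector part lies in `ℂ ⊗ U`, and let
`Φ : 𝕋_ℂ V → 𝕋_ℂ U` be `(X, λ) ↦ (p X, λ ∘ ι)` for a left inverse `p` of the inclusion `ι`.
Then `E_U = Φ (E ∩ W)`, `Φ` preserves the pairing on `W`, and `ker Φ ∩ W = W^⊥`. Since `E`
is Lagrangian, `(E + W)^⊥ = E ∩ W^⊥`, whence
`dim E_U = dim (E ∩ W) - dim (E ∩ W^⊥) = dim W - dim E = (dim U + dim V) - dim V`.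
-/

open Module LinearMap

theorem LinearMap.finrank_map_add_finrank_inf_ker {K M N : Type*} [DivisionRing K]
    [AddCommGroup M] [Module K M] [FiniteDimensional K M] [AddCommGroup N] [Module K N]
    (f : M →ₗ[K] N) (G : Submodule K M) :
    finrank K (G.map f) + finrank K ↥(G ⊓ ker f) = finrank K G := by
  have h := finrank_range_add_finrank_ker (f.domRestrict G)
  rwa [range_domRestrict, ker_domRestrict, ← Submodule.finrank_map_subtype_eq,
    Submodule.map_comap_subtype] at h

theorem LinearMap.baseChange_leftInverse {R A M N : Type*} [CommSemiring R] [CommSemiring A]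
    [Algebra R A] [AddCommMonoid M] [Module R M] [AddCommMonoid N] [Module R N]
    {p : N →ₗ[R] M} {ι : M →ₗ[R] N} (hp : p ∘ₗ ι = LinearMap.id) :
    Function.LeftInverse (p.baseChange A) (ι.baseChange A) := fun a => by
  rw [← comp_apply, ← baseChange_comp, hp, baseChange_id, id_apply]

namespace LinearMap.BilinForm

theorem orthogonal_sup {R M : Type*} [CommSemiring R] [AddCommMonoid M] [Module R M]
    {B : LinearMap.BilinForm R M} (E W : Submodule R M) :
    B.orthogonal (E ⊔ W) = B.orthogonal E ⊓ B.orthogonal W :=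
  le_antisymm (le_inf (orthogonal_le le_sup_left) (orthogonal_le le_sup_right))
    fun _ ⟨hE, hW⟩ _ hx => by
      obtain ⟨a, ha, b, hb, rfl⟩ := Submodule.mem_sup.mp hx
      rw [map_add, LinearMap.add_apply, hE a ha, hW b hb, add_zero]

variable {K M N : Type*} [Field K] [AddCommGroup M] [Module K M] [FiniteDimensional K M]
  {B : LinearMap.BilinForm K M}

theorem finrank_add_finrank_orthogonal_of_nondegenerate (hB : B.Nondegenerate)
    (W : Submodule K M) :
    finrank K W + finrank K (B.orthogonal W) = finrank K M := by
  have h := finrank_add_finrank_orthogonal' (B := B) W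
  rwa [hB.ker_eq_bot, inf_bot_eq, finrank_bot, add_zero] at h

theorem orthogonal_eq_self_of_isotropic (hB : B.Nondegenerate) {E : Submodule K M}
    (hiso : ∀ x ∈ E, ∀ y ∈ E, B x y = 0) (hdim : 2 * finrank K E = finrank K M) :
    B.orthogonal E = E := by
  have hle : E ≤ B.orthogonal E := fun x hx y hy => hiso y hy x hx
  have := finrank_add_finrank_orthogonal_of_nondegenerate hB E
  exact (Submodule.eq_of_le_of_finrank_le hle (by omega)).symm

theorem finrank_inf_add_finrank_of_orthogonal_eq_self (hB : B.Nondegenerate)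
    {E : Submodule K M} (hE : B.orthogonal E = E) (W : Submodule K M) :
    finrank K ↥(E ⊓ W) + finrank K E = finrank K ↥(E ⊓ B.orthogonal W) + finrank K W := by
  have hsup := finrank_add_finrank_orthogonal_of_nondegenerate hB (E ⊔ W)
  rw [orthogonal_sup, hE] at hsup
  have hE' := finrank_add_finrank_orthogonal_of_nondegenerate hB E
  rw [hE] at hE'
  have := Submodule.finrank_sup_add_finrank_inf_eq E W
  omega

theorem finrank_map_inf_add_finrank [AddCommGroup N] [Module K N] (hB : B.Nondegenerate)
    {E W : Submodule K M} (hE : B.orthogonal E = E) {f : M →ₗ[K] N}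
    (hf : ker f ⊓ W = B.orthogonal W) :
    finrank K ((E ⊓ W).map f) + finrank K E = finrank K W := by
  have h := finrank_map_add_finrank_inf_ker f (E ⊓ W)
  rw [inf_assoc, inf_comm W (ker f), hf] at h
  have := finrank_inf_add_finrank_of_orthogonal_eq_self hB hE W
  omega

end LinearMap.BilinForm

section Complexification

variable {V U : Type*} [AddCommGroup V] [Module ℝ V] [AddCommGroup U] [Module ℝ U]

theorem prodRight_eq_projTanC_projCotC (z : ℂ ⊗[ℝ] GTan V) :
    prodRight ℝ ℂ ℂ V (Dual ℝ V) z = (projTanC V z, projCotC V z) := by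
  induction z using TensorProduct.induction_on with
  | zero => simp only [map_zero]; rfl
  | tmul c x => simp [projTanC, projCotC]
  | add x y hx hy => simp [hx, hy]

theorem projTanC_projCotC_injective :
    Function.Injective fun z : ℂ ⊗[ℝ] GTan V => (projTanC V z, projCotC V z) := by
  simpa only [← prodRight_eq_projTanC_projCotC] using (prodRight ℝ ℂ ℂ V (Dual ℝ V)).injective

theorem projTanC_projCotC_surjective :
    Function.Surjective fun z : ℂ ⊗[ℝ] GTan V => (projTanC V z, projCotC V z) := by
  simpa only [← prodRight_eq_projTanC_projCotC] using (prodRight ℝ ℂ ℂ V (Dual ℝ V)).surjective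

section Restriction

variable (p : V →ₗ[ℝ] U) (ι : U →ₗ[ℝ] V)

def tanRangeC : Submodule ℂ (ℂ ⊗[ℝ] GTan V) :=
  (range (ι.baseChange ℂ)).comap (projTanC V)

def restrictC : ℂ ⊗[ℝ] GTan V →ₗ[ℂ] ℂ ⊗[ℝ] GTan U :=
  (p.prodMap ι.dualMap).baseChange ℂ

theorem projTanC_restrictC (z : ℂ ⊗[ℝ] GTan V) :
    projTanC U (restrictC p ι z) = p.baseChange ℂ (projTanC V z) := by
  induction z using TensorProduct.induction_on with
  | zero => simp
  | tmul c x => simp [restrictC, projTanC]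
  | add x y hx hy => simp only [map_add, hx, hy]

theorem projCotC_restrictC (z : ℂ ⊗[ℝ] GTan V) :
    projCotC U (restrictC p ι z) = ι.dualMap.baseChange ℂ (projCotC V z) := by
  induction z using TensorProduct.induction_on with
  | zero => simp
  | tmul c x => simp [restrictC, projCotC]
  | add x y hx hy => simp only [map_add, hx, hy]

variable {p ι}

theorem baseChange_comp_apply_of_mem_tanRangeC (hp : p ∘ₗ ι = LinearMap.id) {z : ℂ ⊗[ℝ] GTan V}
    (hz : z ∈ tanRangeC ι) : ι.baseChange ℂ (p.baseChange ℂ (projTanC V z)) = projTanC V z := by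
  obtain ⟨a, ha⟩ := hz
  rw [← ha, baseChange_leftInverse hp]

theorem coe_map_restrictC_inf_tanRangeC (hp : p ∘ₗ ι = LinearMap.id)
    (E : Submodule ℂ (ℂ ⊗[ℝ] GTan V)) :
    ((E ⊓ tanRangeC ι).map (restrictC p ι) : Set (ℂ ⊗[ℝ] GTan U)) =
      {w | ∃ z ∈ E, projTanC V z = ι.baseChange ℂ (projTanC U w) ∧
        projCotC U w = ι.dualMap.baseChange ℂ (projCotC V z)} := by
  ext w
  constructor
  · rintro ⟨z, ⟨hzE, hzW⟩, rfl⟩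
    exact ⟨z, hzE, by rw [projTanC_restrictC, baseChange_comp_apply_of_mem_tanRangeC hp hzW],
      projCotC_restrictC p ι z⟩
  · rintro ⟨z, hzE, htan, hcot⟩
    refine ⟨z, ⟨hzE, _, htan.symm⟩, projTanC_projCotC_injective ?_⟩
    simpa [projTanC_restrictC, projCotC_restrictC, htan, hcot] using
      baseChange_leftInverse hp (projTanC U w)

end Restriction

variable [FiniteDimensional ℝ V]

variable (V) in
abbrev dualBaseChange : ℂ ⊗[ℝ] Dual ℝ V ≃ₗ[ℂ] Dual ℂ (ℂ ⊗[ℝ] V) :=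
  (TensorProduct.isBaseChange ℝ V ℂ).toDualBaseChange

theorem dualBaseChange_tmul_tmul (a : ℂ) (f : Dual ℝ V) (c : ℂ) (v : V) :
    dualBaseChange V (a ⊗ₜ f) (c ⊗ₜ v) = a * c * f v := by
  have h := IsBaseChange.toDualBaseChange_tmul (TensorProduct.isBaseChange ℝ V ℂ) a f v
  rw [show c ⊗ₜ[ℝ] v = c • TensorProduct.mk ℝ ℂ V 1 v by simp [smul_tmul'], map_smul, h]
  simp only [Algebra.algebraMap_eq_smul_one, Complex.real_smul, mul_one, smul_eq_mul]
  ring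

theorem stdPairingC_apply (x y : ℂ ⊗[ℝ] GTan V) :
    stdPairingC V x y = (dualBaseChange V (projCotC V x) (projTanC V y)
      + dualBaseChange V (projCotC V y) (projTanC V x)) / 2 := by
  induction x using TensorProduct.induction_on with
  | zero => simp
  | add x x' hx hx' => simp only [map_add, LinearMap.add_apply, hx, hx']; ring
  | tmul a u =>
    induction y using TensorProduct.induction_on with
    | zero => simp
    | add y y' hy hy' => simp only [map_add, LinearMap.add_apply, hy, hy']; ring
    | tmul c v =>
      simp only [stdPairingC, stdPairing, BilinForm.baseChange_tmul, mk₂_apply,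
        Complex.real_smul, Complex.ofReal_div, Complex.ofReal_add, Complex.ofReal_ofNat, projCotC,
        baseChange_tmul, snd_apply, projTanC, fst_apply, dualBaseChange_tmul_tmul]
      ring

theorem dualBaseChange_dualMap_baseChange [FiniteDimensional ℝ U] (ι : U →ₗ[ℝ] V)
    (b : ℂ ⊗[ℝ] Dual ℝ V) (a : ℂ ⊗[ℝ] U) :
    dualBaseChange U (ι.dualMap.baseChange ℂ b) a = dualBaseChange V b (ι.baseChange ℂ a) := by
  induction b using TensorProduct.induction_on with
  | zero => simp
  | add b b' hb hb' => simp only [map_add, LinearMap.add_apply, hb, hb']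
  | tmul c f =>
    induction a using TensorProduct.induction_on with
    | zero => simp
    | add a a' ha ha' => simp only [map_add, ha, ha']
    | tmul d u => simp [dualBaseChange_tmul_tmul]

theorem eq_zero_of_forall_dualBaseChange_apply_eq_zero {a : ℂ ⊗[ℝ] V}
    (h : ∀ b, dualBaseChange V b a = 0) : a = 0 :=
  (Module.forall_dual_apply_eq_zero_iff ℂ a).mp fun φ => by
    simpa using h ((dualBaseChange V).symm φ)

theorem stdPairingC_isSymm : (stdPairingC V).IsSymm :=
  ⟨fun x y => by rw [stdPairingC_apply, stdPairingC_apply, add_comm]⟩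

theorem mem_orthogonal_comap_projTanC {A : Submodule ℂ (ℂ ⊗[ℝ] V)} {z : ℂ ⊗[ℝ] GTan V} :
    z ∈ (stdPairingC V).orthogonal (A.comap (projTanC V)) ↔
      projTanC V z = 0 ∧ ∀ a ∈ A, dualBaseChange V (projCotC V z) a = 0 := by
  simp only [BilinForm.mem_orthogonal_iff, Submodule.mem_comap, stdPairingC_apply,
    div_eq_zero_iff, two_ne_zero, or_false]
  constructor
  · intro h
    have htan : projTanC V z = 0 := eq_zero_of_forall_dualBaseChange_apply_eq_zero fun b => by
      obtain ⟨w, hw⟩ := projTanC_projCotC_surjective (V := V) (0, b)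
      simp only [Prod.mk.injEq] at hw
      simpa [hw] using h w (by simp [hw])
    refine ⟨htan, fun a ha => ?_⟩
    obtain ⟨w, hw⟩ := projTanC_projCotC_surjective (V := V) (a, 0)
    simp only [Prod.mk.injEq] at hw
    simpa [hw, htan] using h w (by simpa [hw] using ha)
  · rintro ⟨htan, hcot⟩ w hw
    simp [htan, hcot _ hw]

theorem stdPairingC_nondegenerate : (stdPairingC V).Nondegenerate := by
  refine (LinearMap.IsRefl.nondegenerate_iff_separatingLeft
    (BilinForm.isSymm_iff.mp stdPairingC_isSymm).isRefl).mpr fun z hz => ?_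
  have hmem : z ∈ (stdPairingC V).orthogonal ((⊤ : Submodule ℂ _).comap (projTanC V)) :=
    fun w _ => (stdPairingC_isSymm.eq w z).trans (hz w)
  obtain ⟨htan, hcot⟩ := mem_orthogonal_comap_projTanC.mp hmem
  have hcot' : projCotC V z = 0 :=
    (dualBaseChange V).injective (LinearMap.ext fun a => by simpa using hcot a trivial)
  exact projTanC_projCotC_injective (by simp [htan, hcot'])

variable (V) in
theorem finrank_baseChange_gTan : finrank ℂ (ℂ ⊗[ℝ] GTan V) = 2 * finrank ℝ V := by
  rw [finrank_baseChange, finrank_prod, Subspace.dual_finrank_eq]; ring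

variable {p : V →ₗ[ℝ] U} {ι : U →ₗ[ℝ] V}

theorem stdPairingC_restrictC [FiniteDimensional ℝ U] (hp : p ∘ₗ ι = LinearMap.id)
    {x y : ℂ ⊗[ℝ] GTan V} (hx : x ∈ tanRangeC ι) (hy : y ∈ tanRangeC ι) :
    stdPairingC U (restrictC p ι x) (restrictC p ι y) = stdPairingC V x y := by
  simp only [stdPairingC_apply, projTanC_restrictC, projCotC_restrictC,
    dualBaseChange_dualMap_baseChange, baseChange_comp_apply_of_mem_tanRangeC hp hx,
    baseChange_comp_apply_of_mem_tanRangeC hp hy]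

theorem mem_orthogonal_tanRangeC [FiniteDimensional ℝ U] {z : ℂ ⊗[ℝ] GTan V} :
    z ∈ (stdPairingC V).orthogonal (tanRangeC ι) ↔
      projTanC V z = 0 ∧ ι.dualMap.baseChange ℂ (projCotC V z) = 0 := by
  rw [tanRangeC, mem_orthogonal_comap_projTanC]
  refine and_congr_right fun _ => ⟨fun h => (dualBaseChange U).injective ?_, fun h => ?_⟩
  · refine LinearMap.ext fun a => ?_
    simpa [dualBaseChange_dualMap_baseChange] using h _ (mem_range_self (ι.baseChange ℂ) a)
  · rintro _ ⟨a, rfl⟩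
    rw [← dualBaseChange_dualMap_baseChange, h, map_zero, LinearMap.zero_apply]

theorem ker_restrictC_inf_tanRangeC [FiniteDimensional ℝ U] (hp : p ∘ₗ ι = LinearMap.id) :
    ker (restrictC p ι) ⊓ tanRangeC ι = (stdPairingC V).orthogonal (tanRangeC ι) := by
  ext z
  rw [mem_orthogonal_tanRangeC, Submodule.mem_inf, mem_ker]
  constructor
  · rintro ⟨hz, hzW⟩
    have htan := congr_arg (projTanC U) hz
    rw [projTanC_restrictC, map_zero] at htan
    refine ⟨?_, by rw [← projCotC_restrictC p, hz, map_zero]⟩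
    rw [← baseChange_comp_apply_of_mem_tanRangeC hp hzW, htan, map_zero]
  · rintro ⟨htan, hcot⟩
    refine ⟨projTanC_projCotC_injective ?_, by simp [tanRangeC, htan]⟩
    simp [projTanC_restrictC, projCotC_restrictC, htan, hcot]

theorem finrank_tanRangeC (hp : p ∘ₗ ι = LinearMap.id) :
    finrank ℂ (tanRangeC ι) = finrank ℝ U + finrank ℝ V := by
  have hsurj : Function.Surjective (projTanC V) := fun a =>
    (projTanC_projCotC_surjective (a, 0)).imp fun _ h => congr_arg Prod.fst h
  have hker := finrank_range_add_finrank_ker (projTanC V)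
  rw [range_eq_top.mpr hsurj, finrank_top, finrank_baseChange_gTan, finrank_baseChange] at hker
  have hW := finrank_map_add_finrank_inf_ker (projTanC V) (tanRangeC ι)
  rw [tanRangeC] at hW ⊢
  rw [Submodule.map_comap_eq_of_surjective hsurj,
    inf_eq_right.mpr fun z hz => by simp [mem_ker.mp hz],
    finrank_range_of_inj (baseChange_leftInverse hp).injective, finrank_baseChange] at hW
  omega

end Complexification

/-- Restriction of a maximal isotropic `E ⊆ 𝕋_ℂ V` to a subspace `U ⊆ V`:
`E_U = {(X, λ∘ι_ℂ) : X ∈ ℂ ⊗ U, λ ∈ ℂ ⊗ V*, (ι_ℂ X, λ) ∈ E}` is a maximal isotropic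
complex subspace of `𝕋_ℂ U`. Here an element `w ∈ 𝕋_ℂ U` is described by its two
components `projTanC U w` and `projCotC U w`, `ι_ℂ` is the complexified inclusion, and
`λ ∘ ι_ℂ` is the complexified restriction of functionals. -/
theorem restriction_of_maximal_isotropic_is_maximal_isotropic
    (V : Type*) [AddCommGroup V] [Module ℝ V] [FiniteDimensional ℝ V]
    (U : Submodule ℝ V)
    (E : Submodule ℂ (ℂ ⊗[ℝ] GTan V))
    (hiso : ∀ x ∈ E, ∀ y ∈ E, stdPairingC V x y = 0)
    (hdim : Module.finrank ℂ E = Module.finrank ℝ V) :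
    ∃ F : Submodule ℂ (ℂ ⊗[ℝ] GTan ↥U),
      (F : Set (ℂ ⊗[ℝ] GTan ↥U)) =
        {w : ℂ ⊗[ℝ] GTan ↥U | ∃ z ∈ E,
          projTanC V z = (U.subtype.baseChange ℂ) (projTanC ↥U w) ∧
          projCotC ↥U w = (U.subtype.dualMap.baseChange ℂ) (projCotC V z)} ∧
      (∀ x ∈ F, ∀ y ∈ F, stdPairingC ↥U x y = 0) ∧
      Module.finrank ℂ F = Module.finrank ℝ ↥U := by
  obtain ⟨p, hp⟩ := U.subtype.exists_leftInverse_of_injective U.ker_subtype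
  have hE : (stdPairingC V).orthogonal E = E :=
    BilinForm.orthogonal_eq_self_of_isotropic stdPairingC_nondegenerate hiso
      (by rw [hdim, finrank_baseChange_gTan])
  refine ⟨(E ⊓ tanRangeC U.subtype).map (restrictC p U.subtype),
    coe_map_restrictC_inf_tanRangeC hp E, ?_, ?_⟩
  · rintro _ ⟨x, hx, rfl⟩ _ ⟨y, hy, rfl⟩
    rw [stdPairingC_restrictC hp hx.2 hy.2]
    exact hiso x hx.1 y hy.1
  · have h := BilinForm.finrank_map_inf_add_finrank stdPairingC_nondegenerate hE
      (ker_restrictC_inf_tanRangeC hp)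
    rw [finrank_tanRangeC hp] at h
    omega
end
end
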